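/- Let (ΛV, d) be a pure Sullivan algebra over a field K of characteristic zero, with even generators x₀,…,x_p and odd generators y₀,…,y_q, such that dy₀ = x₀ − a for some a ∈ Λ(x₁,…,x_p). Define η : Λ(x₀,…,x_p) → Λ(x₁,…,x_p) by η(x₀) = a, η(x_i) = x_i for i ≥ 1, and define the pure Sullivan algebra (ΛW, d̄) on generators x₁,…,x_p, y₁,…,y_q with d̄x_i = 0 and d̄y_j = η(dy_j), and the algebra (Λ(x₀,y₀), d̄) with d̄x₀ = 0, d̄y₀ = x₀. Then there is an isomorphism of differential graded algebras (ΛV, d) ≅ (ΛW, d̄) ⊗ (Λ(x₀,y₀), d̄). -/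

import Mathlib

open scoped TensorProduct

/-- The free graded-commutative algebra on even generators `x_i` (`i : ι`) and
odd generators `y_j` (`j : κ`), modelled as `K[x_i] ⊗ Λ(y_j)`. -/
abbrev FreeGC (K : Type) [Field K] (ι κ : Type) : Type :=
  MvPolynomial ι K ⊗[K] ExteriorAlgebra K (κ →₀ K)

/-- The even generator `x_i`. -/
noncomputable def genEv (K : Type) [Field K] (ι κ : Type) (i : ι) : FreeGC K ι κ :=
  MvPolynomial.X i ⊗ₜ[K] 1

/-- The odd generator `y_j`. -/
noncomputable def genOd (K : Type) [Field K] (ι κ : Type) (j : κ) : FreeGC K ι κ :=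
  1 ⊗ₜ[K] ExteriorAlgebra.ι K (Finsupp.single j 1)

/-!
Write `φ` for the substitution `x₀ ↦ x₀ + a`. Since `φ(x₀ − a) = x₀`, and since
`φ(P) ≡ η(P)` modulo `x₀` for every polynomial `P`, we can write
`φ(d y_j) = η(d y_j) + x₀ b_j`. The algebra automorphism `x ↦ φ(x)`, `y₀ ↦ y₀`,
`y_j ↦ y_j + b_j y₀` then carries `d` to the target differential: both sides are
derivations twisted by the parity automorphism, which the automorphism preserves,
so it suffices to compare them on generators.
-/

open MvPolynomial

section TwistedDerivation

def IsTwistedDerivation {R : Type*} [Mul R] [Add R] (σ d : R → R) : Prop :=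
  ∀ a b, d (a * b) = d a * b + σ a * d b

variable {K R S : Type*} [CommSemiring K] [Ring R] [Ring S] [Algebra K R] [Algebra K S]

theorem IsTwistedDerivation.apply_one {σ d : R → R} (hσ : σ 1 = 1)
    (hd : IsTwistedDerivation σ d) : d 1 = 0 := by
  have h := hd 1 1
  rw [mul_one, mul_one, hσ, one_mul] at h
  exact left_eq_add.mp h

theorem IsTwistedDerivation.map_apply_eq_of_adjoin_eq_top (F : R →ₐ[K] S)
    {σR : R →ₐ[K] R} {σS : S →ₐ[K] S} (hF : σS.comp F = F.comp σR)
    {d : R →ₗ[K] R} {dS : S →ₗ[K] S} (hd : IsTwistedDerivation σR d)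
    (hdS : IsTwistedDerivation σS dS) {s : Set R} (hs : Algebra.adjoin K s = ⊤)
    (hgen : ∀ g ∈ s, F (d g) = dS (F g)) (v : R) : F (d v) = dS (F v) := by
  have hv : v ∈ Algebra.adjoin K s := hs ▸ Algebra.mem_top
  induction hv using Algebra.adjoin_induction with
  | mem g hg => exact hgen g hg
  | algebraMap r =>
    have hd1 : d 1 = 0 := hd.apply_one σR.map_one
    have hdS1 : dS 1 = 0 := hdS.apply_one σS.map_one
    rw [Algebra.algebraMap_eq_smul_one, map_smul d, hd1, smul_zero, map_zero, map_smul F,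
      map_one, map_smul dS, hdS1, smul_zero]
  | add x y _ _ hx hy => rw [map_add, map_add, map_add, map_add, hx, hy]
  | mul x y _ _ hx hy =>
    rw [hd, map_add, map_mul, map_mul, hx, hy, ← AlgHom.comp_apply F σR, ← hF,
      AlgHom.comp_apply, ← hdS, map_mul F]

end TwistedDerivation

namespace MvPolynomial

theorem algHom_sub_mem_of_forall_X {σ R S : Type*} [CommSemiring R] [CommRing S]
    [Algebra R S] {f g : MvPolynomial σ R →ₐ[R] S} {I : Ideal S}
    (h : ∀ i, f (X i) - g (X i) ∈ I) (Q : MvPolynomial σ R) : f Q - g Q ∈ I := by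
  rw [← Ideal.Quotient.eq]
  exact AlgHom.congr_fun (algHom_ext (f := (Ideal.Quotient.mkₐ R I).comp f)
    (g := (Ideal.Quotient.mkₐ R I).comp g) fun i => Ideal.Quotient.eq.mpr (h i)) Q

variable {K : Type*} [CommRing K] {n : ℕ}

noncomputable def translateX0Hom (b : MvPolynomial (Fin n) K) :
    MvPolynomial (Fin (n + 1)) K →ₐ[K] MvPolynomial (Fin (n + 1)) K :=
  aeval (Fin.cases (X 0 + rename Fin.succ b) fun i => X i.succ)

@[simp]
theorem translateX0Hom_X_zero (b : MvPolynomial (Fin n) K) :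
    translateX0Hom b (X 0) = X 0 + rename Fin.succ b := by
  simp [translateX0Hom]

@[simp]
theorem translateX0Hom_X_succ (b : MvPolynomial (Fin n) K) (i : Fin n) :
    translateX0Hom b (X i.succ) = X i.succ := by
  simp [translateX0Hom]

@[simp]
theorem translateX0Hom_rename (b t : MvPolynomial (Fin n) K) :
    translateX0Hom b (rename Fin.succ t) = rename Fin.succ t :=
  AlgHom.congr_fun (algHom_ext (f := (translateX0Hom b).comp (rename Fin.succ))
    (g := rename Fin.succ) fun i => by simp) t

theorem translateX0Hom_comp (b c : MvPolynomial (Fin n) K) :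
    (translateX0Hom b).comp (translateX0Hom c) = translateX0Hom (b + c) := by
  refine algHom_ext fun i => ?_
  cases i using Fin.cases <;> simp [add_assoc]

theorem translateX0Hom_zero : translateX0Hom (0 : MvPolynomial (Fin n) K) = AlgHom.id K _ := by
  refine algHom_ext fun i => ?_
  cases i using Fin.cases <;> simp

noncomputable def translateX0 (b : MvPolynomial (Fin n) K) :
    MvPolynomial (Fin (n + 1)) K ≃ₐ[K] MvPolynomial (Fin (n + 1)) K :=
  AlgEquiv.ofAlgHom (translateX0Hom b) (translateX0Hom (-b))
    (by rw [translateX0Hom_comp, add_neg_cancel, translateX0Hom_zero])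
    (by rw [translateX0Hom_comp, neg_add_cancel, translateX0Hom_zero])

theorem coe_translateX0 (b : MvPolynomial (Fin n) K) :
    (translateX0 b : MvPolynomial (Fin (n + 1)) K →ₐ[K] MvPolynomial (Fin (n + 1)) K) =
      translateX0Hom b :=
  rfl

theorem X_zero_dvd_translateX0Hom_sub (a : MvPolynomial (Fin n) K)
    (Q : MvPolynomial (Fin (n + 1)) K) :
    X 0 ∣ translateX0Hom a Q - rename Fin.succ (aeval (Fin.cases a fun i => X i) Q) := by
  rw [← Ideal.mem_span_singleton]
  refine algHom_sub_mem_of_forall_X (g := (rename Fin.succ).comp (aeval _)) (fun i => ?_) Q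
  cases i using Fin.cases <;> simp

end MvPolynomial

namespace FreeGC

variable {K : Type} [Field K] {ι κ : Type}

theorem tmul_one_mul_genOd (c : MvPolynomial ι K) (j : κ) :
    (c ⊗ₜ[K] 1 : FreeGC K ι κ) * genOd K ι κ j =
      c ⊗ₜ[K] ExteriorAlgebra.ι K (Finsupp.single j 1) := by
  rw [genOd, Algebra.TensorProduct.tmul_mul_tmul, mul_one, one_mul]

theorem adjoin_range_genEv_union_range_genOd :
    Algebra.adjoin K (Set.range (genEv K ι κ) ∪ Set.range (genOd K ι κ)) = ⊤ := by
  set S := Algebra.adjoin K (Set.range (genEv K ι κ) ∪ Set.range (genOd K ι κ))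
  have hL : (⊤ : Subalgebra K (MvPolynomial ι K)).map
      Algebra.TensorProduct.includeLeft ≤ S := by
    rw [← adjoin_range_X, AlgHom.map_adjoin, ← Set.range_comp]
    exact Algebra.adjoin_mono Set.subset_union_left
  have hR : (⊤ : Subalgebra K (ExteriorAlgebra K (κ →₀ K))).map
      Algebra.TensorProduct.includeRight ≤ S := by
    rw [← CliffordAlgebra.adjoin_range_ι, AlgHom.map_adjoin, Algebra.adjoin_le_iff]
    rintro _ ⟨_, ⟨m, rfl⟩, rfl⟩
    rw [← m.sum_single, map_finsuppSum, map_finsuppSum]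
    refine Subalgebra.sum_mem _ fun j _ => ?_
    dsimp only
    rw [← Finsupp.smul_single_one, map_smul, map_smul]
    exact S.smul_mem (Algebra.subset_adjoin (Or.inr ⟨j, rfl⟩)) _
  rw [eq_top_iff, ← Algebra.TensorProduct.adjoin_tmul_eq_top, Algebra.adjoin_le_iff]
  rintro _ ⟨P, e, rfl⟩
  rw [← mul_one P, ← one_mul e, ← Algebra.TensorProduct.tmul_mul_tmul]
  exact S.mul_mem (hL ⟨P, trivial, rfl⟩) (hR ⟨e, trivial, rfl⟩)

theorem algHom_ext {B : Type*} [Semiring B] [Algebra K B] {f g : FreeGC K ι κ →ₐ[K] B}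
    (hx : ∀ i, f (genEv K ι κ i) = g (genEv K ι κ i))
    (hy : ∀ j, f (genOd K ι κ j) = g (genOd K ι κ j)) : f = g :=
  AlgHom.ext_of_adjoin_eq_top adjoin_range_genEv_union_range_genOd <| by
    rintro _ (⟨i, rfl⟩ | ⟨j, rfl⟩)
    exacts [hx i, hy j]

theorem apply_tmul_one_eq_self {f : FreeGC K ι κ →ₐ[K] FreeGC K ι κ}
    (hf : ∀ i, f (genEv K ι κ i) = genEv K ι κ i) (P : MvPolynomial ι K) :
    f (P ⊗ₜ[K] 1) = P ⊗ₜ[K] 1 :=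
  AlgHom.congr_fun (MvPolynomial.algHom_ext (f := f.comp Algebra.TensorProduct.includeLeft)
    (g := Algebra.TensorProduct.includeLeft) hf) P

theorem commute_tmul_one (c : MvPolynomial ι K) (v : FreeGC K ι κ) :
    Commute (c ⊗ₜ[K] 1) v := by
  induction v using TensorProduct.induction_on with
  | zero => exact Commute.zero_right _
  | tmul P e => exact (Commute.all c P).tmul (Commute.one_left e)
  | add v w hv hw => exact hv.add_right hw

noncomputable def oddPart (k : κ) (c : κ → MvPolynomial ι K) :
    (κ →₀ K) →ₗ[K] FreeGC K ι κ :=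
  Algebra.TensorProduct.includeRight.toLinearMap ∘ₗ ExteriorAlgebra.ι K +
    (TensorProduct.mk K _ _).flip (ExteriorAlgebra.ι K (Finsupp.single k 1)) ∘ₗ
      Finsupp.linearCombination K c

theorem oddPart_apply (k : κ) (c : κ → MvPolynomial ι K) (m : κ →₀ K) :
    oddPart k c m = 1 ⊗ₜ[K] ExteriorAlgebra.ι K m +
      Finsupp.linearCombination K c m ⊗ₜ[K] ExteriorAlgebra.ι K (Finsupp.single k 1) :=
  rfl

theorem oddPart_mul_self (k : κ) (c : κ → MvPolynomial ι K) (m : κ →₀ K) :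
    oddPart k c m * oddPart k c m = 0 := by
  simp only [oddPart_apply, add_mul, mul_add, Algebra.TensorProduct.tmul_mul_tmul,
    ExteriorAlgebra.ι_sq_zero, TensorProduct.tmul_zero, one_mul, mul_one, zero_add, add_zero]
  rw [← TensorProduct.tmul_add, ExteriorAlgebra.ι_add_mul_swap, TensorProduct.tmul_zero]

noncomputable def shear (φ : MvPolynomial ι K →ₐ[K] MvPolynomial ι K) (k : κ)
    (c : κ → MvPolynomial ι K) : FreeGC K ι κ →ₐ[K] FreeGC K ι κ :=
  Algebra.TensorProduct.lift (Algebra.TensorProduct.includeLeft.comp φ)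
    (ExteriorAlgebra.lift K ⟨oddPart k c, oddPart_mul_self k c⟩)
    fun P _ => show Commute _ _ from commute_tmul_one (φ P) _

variable (φ : MvPolynomial ι K →ₐ[K] MvPolynomial ι K) (k : κ) (c : κ → MvPolynomial ι K)

theorem shear_tmul_one (P : MvPolynomial ι K) :
    shear φ k c (P ⊗ₜ[K] 1) = φ P ⊗ₜ[K] 1 := by
  rw [shear, Algebra.TensorProduct.lift_tmul, map_one, mul_one]
  rfl

theorem shear_genEv (i : ι) : shear φ k c (genEv K ι κ i) = φ (X i) ⊗ₜ[K] 1 :=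
  shear_tmul_one φ k c (X i)

theorem shear_genOd (j : κ) :
    shear φ k c (genOd K ι κ j) = genOd K ι κ j + (c j ⊗ₜ[K] 1) * genOd K ι κ k := by
  rw [genOd, shear, Algebra.TensorProduct.lift_tmul, map_one, one_mul,
    ExteriorAlgebra.lift_ι_apply, tmul_one_mul_genOd]
  simp [oddPart_apply]

theorem shear_comp_shear (φ₁ φ₂ : MvPolynomial ι K →ₐ[K] MvPolynomial ι K)
    {c₁ : κ → MvPolynomial ι K} (c₂ : κ → MvPolynomial ι K) (h : c₁ k = 0) :
    (shear φ₁ k c₁).comp (shear φ₂ k c₂) = shear (φ₁.comp φ₂) k (c₁ + φ₁ ∘ c₂) := by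
  refine algHom_ext (fun i => ?_) fun j => ?_
  · simp only [AlgHom.comp_apply, shear_genEv, shear_tmul_one]
  · rw [AlgHom.comp_apply, shear_genOd, map_add, map_mul, shear_tmul_one, shear_genOd,
      shear_genOd, shear_genOd, h, TensorProduct.zero_tmul, zero_mul, add_zero, add_assoc,
      ← add_mul, ← TensorProduct.add_tmul]
    rfl

theorem shear_id : shear (AlgHom.id K (MvPolynomial ι K)) k 0 = AlgHom.id K _ :=
  algHom_ext (fun i => by rw [shear_genEv]; rfl) fun j => by simp [shear_genOd]

noncomputable def shearEquiv (e : MvPolynomial ι K ≃ₐ[K] MvPolynomial ι K) (hc : c k = 0) :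
    FreeGC K ι κ ≃ₐ[K] FreeGC K ι κ :=
  AlgEquiv.ofAlgHom (shear e k c) (shear e.symm k (-(e.symm ∘ c)))
    (by
      rw [shear_comp_shear _ _ _ _ hc, AlgEquiv.comp_symm]
      convert shear_id k
      ext j : 1
      simp)
    (by
      rw [shear_comp_shear _ _ _ _ (by simp [hc]), AlgEquiv.symm_comp]
      convert shear_id k
      ext j : 1
      simp)

theorem comp_shear_of_parity {σ : FreeGC K ι κ →ₐ[K] FreeGC K ι κ}
    (hσx : ∀ i, σ (genEv K ι κ i) = genEv K ι κ i)
    (hσy : ∀ j, σ (genOd K ι κ j) = -genOd K ι κ j) :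
    σ.comp (shear φ k c) = (shear φ k c).comp σ :=
  algHom_ext (fun i => by simp [shear_genEv, hσx, apply_tmul_one_eq_self hσx])
    fun j => by
      simp only [AlgHom.comp_apply, shear_genOd, map_add, map_mul, map_neg, hσy,
        apply_tmul_one_eq_self hσx, mul_neg (α := FreeGC K ι κ), neg_add]

theorem apply_tmul_one_eq_zero {σ : FreeGC K ι κ →ₐ[K] FreeGC K ι κ}
    (hσx : ∀ i, σ (genEv K ι κ i) = genEv K ι κ i) {d : FreeGC K ι κ →ₗ[K] FreeGC K ι κ}
    (hd : IsTwistedDerivation σ d) (hdx : ∀ i, d (genEv K ι κ i) = 0)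
    (P : MvPolynomial ι K) : d (P ⊗ₜ[K] 1) = 0 := by
  have hzero : IsTwistedDerivation (AlgHom.id K (MvPolynomial ι K))
      (0 : MvPolynomial ι K →ₗ[K] MvPolynomial ι K) := fun _ _ => by simp
  have hσ : σ.comp Algebra.TensorProduct.includeLeft =
      Algebra.TensorProduct.includeLeft.comp (AlgHom.id K _) :=
    AlgHom.ext (apply_tmul_one_eq_self hσx)
  simpa using (hzero.map_apply_eq_of_adjoin_eq_top _ hσ hd adjoin_range_X
    (by rintro _ ⟨i, rfl⟩; rw [LinearMap.zero_apply, map_zero]; exact (hdx i).symm)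
    P).symm

end FreeGC

open FreeGC

theorem stmt_11_general (K : Type) [Field K] (p q : ℕ)
    (σ : FreeGC K (Fin (p + 1)) (Fin (q + 1)) →ₐ[K] FreeGC K (Fin (p + 1)) (Fin (q + 1)))
    (hσx : ∀ i, σ (genEv K (Fin (p + 1)) (Fin (q + 1)) i) = genEv K (Fin (p + 1)) (Fin (q + 1)) i)
    (hσy : ∀ j, σ (genOd K (Fin (p + 1)) (Fin (q + 1)) j) = - genOd K (Fin (p + 1)) (Fin (q + 1)) j)
    (d dT : FreeGC K (Fin (p + 1)) (Fin (q + 1)) →ₗ[K] FreeGC K (Fin (p + 1)) (Fin (q + 1)))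
    (hdleib : ∀ a b, d (a * b) = d a * b + σ a * d b)
    (hdTleib : ∀ a b, dT (a * b) = dT a * b + σ a * dT b)
    -- purity of `d`: `d x_i = 0` and `d y_j` is a polynomial in the `x`'s
    (P : Fin (q + 1) → MvPolynomial (Fin (p + 1)) K)
    (hdx : ∀ i, d (genEv K (Fin (p + 1)) (Fin (q + 1)) i) = 0)
    (hdy : ∀ j, d (genOd K (Fin (p + 1)) (Fin (q + 1)) j) =
      (P j) ⊗ₜ[K] (1 : ExteriorAlgebra K (Fin (q + 1) →₀ K)))
    -- `d y₀ = x₀ − a` with `a ∈ Λ(x₁,…,x_p)`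
    (a : MvPolynomial (Fin p) K)
    (hP0 : P 0 = MvPolynomial.X 0 - MvPolynomial.rename Fin.succ a)
    -- the target differential
    (hdTx : ∀ i, dT (genEv K (Fin (p + 1)) (Fin (q + 1)) i) = 0)
    (hdTy0 : dT (genOd K (Fin (p + 1)) (Fin (q + 1)) 0) = genEv K (Fin (p + 1)) (Fin (q + 1)) 0)
    (hdTy : ∀ j : Fin q,
      dT (genOd K (Fin (p + 1)) (Fin (q + 1)) j.succ) =
        (MvPolynomial.rename Fin.succ
          (MvPolynomial.aeval
            (Fin.cases a (fun i : Fin p => MvPolynomial.X i)) (P j.succ))) ⊗ₜ[K]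
          (1 : ExteriorAlgebra K (Fin (q + 1) →₀ K))) :
    ∃ e : FreeGC K (Fin (p + 1)) (Fin (q + 1)) ≃ₐ[K] FreeGC K (Fin (p + 1)) (Fin (q + 1)),
      ∀ v, e (d v) = dT (e v) := by
  choose b hb using fun j : Fin q => X_zero_dvd_translateX0Hom_sub a (P j.succ)
  let c : Fin (q + 1) → MvPolynomial (Fin (p + 1)) K := Fin.cases 0 b
  refine ⟨shearEquiv 0 c (translateX0 a) rfl,
    IsTwistedDerivation.map_apply_eq_of_adjoin_eq_top _ (comp_shear_of_parity _ 0 c hσx hσy)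
      hdleib hdTleib adjoin_range_genEv_union_range_genOd ?_⟩
  have hdT_tmul_one := apply_tmul_one_eq_zero hσx hdTleib hdTx
  rintro _ (⟨i, rfl⟩ | ⟨j, rfl⟩)
  · rw [hdx, map_zero, shear_genEv, hdT_tmul_one]
  rw [hdy, shear_tmul_one, shear_genOd, map_add, hdTleib, hdT_tmul_one, zero_mul, zero_add,
    apply_tmul_one_eq_self hσx, hdTy0, genEv, Algebra.TensorProduct.tmul_mul_tmul, mul_one,
    coe_translateX0]
  cases j using Fin.cases with
  | zero =>
    rw [hP0, map_sub, translateX0Hom_X_zero, translateX0Hom_rename, add_sub_cancel_right,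
      show c 0 = 0 from rfl, zero_mul, TensorProduct.zero_tmul, add_zero, hdTy0]
    rfl
  | succ j =>
    rw [hdTy j, ← TensorProduct.add_tmul, show c j.succ = b j from rfl]
    congr 1
    linear_combination hb j

set_option maxHeartbeats 1000000 in
set_option synthInstance.maxHeartbeats 200000 in
/-- Let `(ΛV, d)` be a pure Sullivan algebra on even
generators `x₀,…,x_p` and odd generators `y₀,…,y_q`, with `d x_i = 0` and
`d y_j = P_j(x₀,…,x_p)`, such that `d y₀ = x₀ − a` with `a ∈ Λ(x₁,…,x_p)`.
Let `η : Λ(x₀,…,x_p) → Λ(x₁,…,x_p)` substitute `a` for `x₀`, and let the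
"target" differential `d'` on `Λ(x₁,…,x_p,y₁,…,y_q) ⊗ Λ(x₀,y₀)` be given by
`d' x_i = 0`, `d' y_j = η(d y_j)` (`j ≥ 1`) and `d' y₀ = x₀`.  Then there is an
isomorphism of dga's `(ΛV, d) ≅ (ΛW, d̄) ⊗ (Λ(x₀,y₀), d̄)`.  (We realize the
target tensor product on the same free graded-commutative algebra, indexing
`x₀ = genEv 0`, `y₀ = genOd 0`; derivations are encoded via the Leibniz rule
twisted by the parity involution `σ`.) -/
theorem stmt_11 (K : Type) [Field K] [CharZero K] (p q : ℕ)
    (σ : FreeGC K (Fin (p + 1)) (Fin (q + 1)) →ₐ[K] FreeGC K (Fin (p + 1)) (Fin (q + 1)))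
    (hσx : ∀ i, σ (genEv K (Fin (p + 1)) (Fin (q + 1)) i) = genEv K (Fin (p + 1)) (Fin (q + 1)) i)
    (hσy : ∀ j, σ (genOd K (Fin (p + 1)) (Fin (q + 1)) j) = - genOd K (Fin (p + 1)) (Fin (q + 1)) j)
    (hσσ : ∀ a, σ (σ a) = a)
    (d dT : FreeGC K (Fin (p + 1)) (Fin (q + 1)) →ₗ[K] FreeGC K (Fin (p + 1)) (Fin (q + 1)))
    (hdleib : ∀ a b, d (a * b) = d a * b + σ a * d b)
    (hdTleib : ∀ a b, dT (a * b) = dT a * b + σ a * dT b)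
    (hd2 : ∀ a, d (d a) = 0)
    -- purity of `d`: `d x_i = 0` and `d y_j` is a polynomial in the `x`'s
    (P : Fin (q + 1) → MvPolynomial (Fin (p + 1)) K)
    (hdx : ∀ i, d (genEv K (Fin (p + 1)) (Fin (q + 1)) i) = 0)
    (hdy : ∀ j, d (genOd K (Fin (p + 1)) (Fin (q + 1)) j) =
      (P j) ⊗ₜ[K] (1 : ExteriorAlgebra K (Fin (q + 1) →₀ K)))
    -- `d y₀ = x₀ − a` with `a ∈ Λ(x₁,…,x_p)`
    (a : MvPolynomial (Fin p) K)
    (hP0 : P 0 = MvPolynomial.X 0 - MvPolynomial.rename Fin.succ a)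
    -- the target differential
    (hdTx : ∀ i, dT (genEv K (Fin (p + 1)) (Fin (q + 1)) i) = 0)
    (hdTy0 : dT (genOd K (Fin (p + 1)) (Fin (q + 1)) 0) = genEv K (Fin (p + 1)) (Fin (q + 1)) 0)
    (hdTy : ∀ j : Fin q,
      dT (genOd K (Fin (p + 1)) (Fin (q + 1)) j.succ) =
        (MvPolynomial.rename Fin.succ
          (MvPolynomial.aeval
            (Fin.cases a (fun i : Fin p => MvPolynomial.X i)) (P j.succ))) ⊗ₜ[K]
          (1 : ExteriorAlgebra K (Fin (q + 1) →₀ K))) :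
    ∃ e : FreeGC K (Fin (p + 1)) (Fin (q + 1)) ≃ₐ[K] FreeGC K (Fin (p + 1)) (Fin (q + 1)),
      ∀ v, e (d v) = dT (e v) :=
  stmt_11_general K p q σ hσx hσy d dT hdleib hdTleib P hdx hdy a hP0 hdTx hdTy0 hdTy
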